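/- Let Q be a quadri-algebra over a field F of characteristic zero. Then (Q, ∧, ∨), where x ∧ y = x ↗ y + x ↖ y and x ∨ y = x ↘ y + x ↙ y, is a dendriform algebra (with ∧ playing the role of ≺ and ∨ playing the role of ≻); that is, for all x, y, z ∈ Q: (x ∨ y) ∧ z = x ∨ (y ∧ z); (x ∧ y) ∧ z = x ∧ (y ∧ z) + x ∧ (y ∨ z); and x ∨ (y ∨ z) = (x ∧ y) ∨ z + (x ∨ y) ∨ z. -/

import Mathlib

/-!
Each dendriform axiom for `(∧, ∨)` is the sum of three quadri-algebra axioms: after expanding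
by bilinearity, the terms of one side are exactly the left-hand sides of those three axioms.
-/

section VerticalDendriform

variable {R Q : Type*} [CommSemiring R] [AddCommMonoid Q] [Module R Q]
  (se ne nw sw : Q →ₗ[R] Q →ₗ[R] Q)

theorem dendriform_middle_of_quadri
    (q4 : ∀ x y z : Q, nw (sw x y) z = sw x (ne y z + nw y z))
    (q5 : ∀ x y z : Q, nw (se x y) z = se x (nw y z))
    (q6 : ∀ x y z : Q, ne (se x y + sw x y) z = se x (ne y z))
    (x y z : Q) :
    ne (se x y + sw x y) z + nw (se x y + sw x y) z =
      se x (ne y z + nw y z) + sw x (ne y z + nw y z) := by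
  rw [q6, map_add nw, LinearMap.add_apply, q5, q4, map_add (se x), add_assoc]

theorem dendriform_left_of_quadri
    (q1 : ∀ x y z : Q, nw (nw x y) z = nw x (se y z + ne y z + nw y z + sw y z))
    (q2 : ∀ x y z : Q, nw (ne x y) z = ne x (nw y z + sw y z))
    (q3 : ∀ x y z : Q, ne (ne x y + nw x y) z = ne x (ne y z + se y z))
    (x y z : Q) :
    ne (ne x y + nw x y) z + nw (ne x y + nw x y) z =
      (ne x (ne y z + nw y z) + nw x (ne y z + nw y z)) +
        (ne x (se y z + sw y z) + nw x (se y z + sw y z)) := by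
  rw [q3, map_add nw, LinearMap.add_apply, q2, q1]
  simp only [map_add]
  abel

theorem dendriform_right_of_quadri
    (q7 : ∀ x y z : Q, sw (nw x y + sw x y) z = sw x (se y z + sw y z))
    (q8 : ∀ x y z : Q, sw (ne x y + se x y) z = se x (sw y z))
    (q9 : ∀ x y z : Q, se (se x y + ne x y + nw x y + sw x y) z = se x (se y z))
    (x y z : Q) :
    se x (se y z + sw y z) + sw x (se y z + sw y z) =
      (se (ne x y + nw x y) z + sw (ne x y + nw x y) z) +
        (se (se x y + sw x y) z + sw (se x y + sw x y) z) :=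
  calc se x (se y z + sw y z) + sw x (se y z + sw y z)
      = se x (se y z) + se x (sw y z) + sw x (se y z + sw y z) := by rw [map_add (se x)]
    _ = se (se x y + ne x y + nw x y + sw x y) z + sw (ne x y + se x y) z +
          sw (nw x y + sw x y) z := by rw [q9, q8, q7]
    _ = (se (ne x y + nw x y) z + sw (ne x y + nw x y) z) +
          (se (se x y + sw x y) z + sw (se x y + sw x y) z) := by
      simp only [map_add, LinearMap.add_apply]
      abel

end VerticalDendriform

theorem quadri_vertical_dendriform_general
    (F : Type*) [Field F]
    (Q : Type*) [AddCommGroup Q] [Module F Q]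
    (se ne nw sw : Q →ₗ[F] Q →ₗ[F] Q)
    (q1 : ∀ x y z : Q, nw (nw x y) z = nw x (se y z + ne y z + nw y z + sw y z))
    (q2 : ∀ x y z : Q, nw (ne x y) z = ne x (nw y z + sw y z))
    (q3 : ∀ x y z : Q, ne (ne x y + nw x y) z = ne x (ne y z + se y z))
    (q4 : ∀ x y z : Q, nw (sw x y) z = sw x (ne y z + nw y z))
    (q5 : ∀ x y z : Q, nw (se x y) z = se x (nw y z))
    (q6 : ∀ x y z : Q, ne (se x y + sw x y) z = se x (ne y z))
    (q7 : ∀ x y z : Q, sw (nw x y + sw x y) z = sw x (se y z + sw y z))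
    (q8 : ∀ x y z : Q, sw (ne x y + se x y) z = se x (sw y z))
    (q9 : ∀ x y z : Q, se (se x y + ne x y + nw x y + sw x y) z = se x (se y z)) :
    (∀ x y z : Q,
        ne (se x y + sw x y) z + nw (se x y + sw x y) z =
          se x (ne y z + nw y z) + sw x (ne y z + nw y z)) ∧
    (∀ x y z : Q,
        ne (ne x y + nw x y) z + nw (ne x y + nw x y) z =
          (ne x (ne y z + nw y z) + nw x (ne y z + nw y z)) +
            (ne x (se y z + sw y z) + nw x (se y z + sw y z))) ∧
    (∀ x y z : Q,
        se x (se y z + sw y z) + sw x (se y z + sw y z) =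
          (se (ne x y + nw x y) z + sw (ne x y + nw x y) z) +
            (se (se x y + sw x y) z + sw (se x y + sw x y) z)) :=
  ⟨dendriform_middle_of_quadri se ne nw sw q4 q5 q6,
    dendriform_left_of_quadri se ne nw sw q1 q2 q3,
    dendriform_right_of_quadri se ne nw sw q7 q8 q9⟩

/-- If `Q` is a quadri-algebra (ops `se = ↘`, `ne = ↗`, `nw = ↖`, `sw = ↙`)
over a field of characteristic zero, then `(Q, ∧, ∨)` with `x ∧ y = x ↗ y + x ↖ y`
and `x ∨ y = x ↘ y + x ↙ y` is a dendriform algebra (with `∧` as `≺` and `∨` as `≻`). -/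
theorem quadri_vertical_dendriform
    (F : Type*) [Field F] [CharZero F]
    (Q : Type*) [AddCommGroup Q] [Module F Q]
    (se ne nw sw : Q →ₗ[F] Q →ₗ[F] Q)
    (q1 : ∀ x y z : Q, nw (nw x y) z = nw x (se y z + ne y z + nw y z + sw y z))
    (q2 : ∀ x y z : Q, nw (ne x y) z = ne x (nw y z + sw y z))
    (q3 : ∀ x y z : Q, ne (ne x y + nw x y) z = ne x (ne y z + se y z))
    (q4 : ∀ x y z : Q, nw (sw x y) z = sw x (ne y z + nw y z))
    (q5 : ∀ x y z : Q, nw (se x y) z = se x (nw y z))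
    (q6 : ∀ x y z : Q, ne (se x y + sw x y) z = se x (ne y z))
    (q7 : ∀ x y z : Q, sw (nw x y + sw x y) z = sw x (se y z + sw y z))
    (q8 : ∀ x y z : Q, sw (ne x y + se x y) z = se x (sw y z))
    (q9 : ∀ x y z : Q, se (se x y + ne x y + nw x y + sw x y) z = se x (se y z)) :
    (∀ x y z : Q,
        ne (se x y + sw x y) z + nw (se x y + sw x y) z =
          se x (ne y z + nw y z) + sw x (ne y z + nw y z)) ∧
    (∀ x y z : Q,
        ne (ne x y + nw x y) z + nw (ne x y + nw x y) z =
          (ne x (ne y z + nw y z) + nw x (ne y z + nw y z)) +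
            (ne x (se y z + sw y z) + nw x (se y z + sw y z))) ∧
    (∀ x y z : Q,
        se x (se y z + sw y z) + sw x (se y z + sw y z) =
          (se (ne x y + nw x y) z + sw (ne x y + nw x y) z) +
            (se (se x y + sw x y) z + sw (se x y + sw x y) z)) :=
  quadri_vertical_dendriform_general F Q se ne nw sw q1 q2 q3 q4 q5 q6 q7 q8 q9
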